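/- For m ≤ n there exists an optimal transport plan z for the problem defining d_{mn} which is simple, i.e., z_{ii} = π_i^n for all i = 0, ..., m, and z_{ij} = 0 for all j ∈ {0, ..., m} with j ≠ i. -/

import Mathlib

open Finset

/-- `kmPi α i n` is `π_i^n = α_i ∏_{k=i+1}^n (1 - α_k)` (empty product = 1). -/
noncomputable def kmPi (α : ℕ → ℝ) (i n : ℕ) : ℝ :=
  α i * ∏ k ∈ Finset.Icc (i + 1) n, (1 - α k)
/-- A feasible transport plan between the probability vectors `π^m` and `π^n`. -/
def IsPlan (α : ℕ → ℝ) (m n : ℕ) (z : ℕ → ℕ → ℝ) : Prop :=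
  (∀ i ≤ m, ∀ j ≤ n, 0 ≤ z i j) ∧
  (∀ i ≤ m, ∑ j ∈ Finset.range (n + 1), z i j = kmPi α i m) ∧
  (∀ j ≤ n, ∑ i ∈ Finset.range (m + 1), z i j = kmPi α j n)

/-- Transport cost `Σ_{i=0}^m Σ_{j=0}^n z_{ij} d_{i-1,j-1}`, where indices of `D` are
shifted by one: `D i j` stands for `d_{i-1,j-1}`. -/
noncomputable def planCost (D : ℕ → ℕ → ℝ) (m n : ℕ) (z : ℕ → ℕ → ℝ) : ℝ :=
  ∑ i ∈ Finset.range (m + 1), ∑ j ∈ Finset.range (n + 1), z i j * D i j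

/-- `D : ℕ → ℕ → ℝ` encodes the family `d_{mn}` for `m, n ∈ {-1,0,1,...}` with indices
shifted by one: `D (m+1) (n+1) = d_{m,n}`, `D 0 (k+1) = d_{-1,k}`, etc.  It is the
recursive optimal-transport family: boundary values `d_{-1,-1} = 0`,
`d_{-1,k} = d_{k,-1} = 1`, and `d_{mn}` is the minimum transport cost between
`π^m` and `π^n` (the minimum, i.e. attained greatest lower bound). -/
def IsKMDist (α : ℕ → ℝ) (D : ℕ → ℕ → ℝ) : Prop :=
  D 0 0 = 0 ∧ (∀ k : ℕ, D 0 (k + 1) = 1) ∧ (∀ k : ℕ, D (k + 1) 0 = 1) ∧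
  ∀ m n : ℕ,
    IsLeast {c : ℝ | ∃ z : ℕ → ℕ → ℝ, IsPlan α m n z ∧ c = planCost D m n z}
      (D (m + 1) (n + 1))

/-!
Any transport plan between `π^m` and `π^n` with `m ≤ n` can be made simple one column
`t = 0, …, m` at a time without increasing its cost: row `t` takes over the mass `π_t^n - z_tt`
that the other rows send to column `t` (it has enough off-diagonal mass since
`π_t^n ≤ π_t^m`), and those rows receive row `t`'s former off-diagonal mass in exchange.
As `d_{tt} = 0`, the triangle inequality `d_{ij} ≤ d_{it} + d_{tj}` shows that the cost does
not increase, and columns that are already simple are left untouched. Applied to an optimal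
plan, this gives a simple optimal plan.

The triangle inequality for `d` is proved by induction on the middle index, gluing optimal
plans along their common marginal.
-/

section kmPi

variable {α : ℕ → ℝ} {i m n : ℕ}

theorem kmPi_self (α : ℕ → ℝ) (n : ℕ) : kmPi α n n = α n := by
  simp [kmPi]

theorem kmPi_succ (h : i ≤ n) : kmPi α i (n + 1) = (1 - α (n + 1)) * kmPi α i n := by
  rw [kmPi, kmPi, prod_Icc_succ_top (by omega)]
  ring

theorem sum_kmPi (hα0 : α 0 = 1) (n : ℕ) : ∑ i ∈ range (n + 1), kmPi α i n = 1 := by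
  induction n with
  | zero => simp [kmPi, hα0]
  | succ n ih =>
    rw [sum_range_succ, sum_congr rfl fun i hi => kmPi_succ (mem_range_succ_iff.mp hi),
      ← mul_sum, ih, kmPi_self]
    ring

variable (hα0 : α 0 = 1) (hα : ∀ n, 1 ≤ n → α n ∈ Set.Ioo (0 : ℝ) 1)
include hα0 hα

theorem kmPi_pos (i n : ℕ) : 0 < kmPi α i n := by
  refine mul_pos ?_ (prod_pos fun k hk => sub_pos.mpr (hα k ?_).2)
  · rcases i with _ | i
    · simp [hα0]
    · exact (hα _ (by omega)).1
  · have := (mem_Icc.mp hk).1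
    omega

theorem kmPi_le_kmPi (hi : i ≤ m) (hmn : m ≤ n) : kmPi α i n ≤ kmPi α i m := by
  induction n, hmn using Nat.le_induction with
  | base => exact le_rfl
  | succ n hmn ih =>
    calc kmPi α i (n + 1) = (1 - α (n + 1)) * kmPi α i n := kmPi_succ (hi.trans hmn)
      _ ≤ kmPi α i n :=
        mul_le_of_le_one_left (kmPi_pos hα0 hα i n).le (by linarith [(hα (n + 1) (by omega)).1])
      _ ≤ kmPi α i m := ih

end kmPi

structure IsCoupling (μ ν : ℕ → ℝ) (m n : ℕ) (z : ℕ → ℕ → ℝ) : Prop where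
  nonneg : ∀ i ≤ m, ∀ j ≤ n, 0 ≤ z i j
  sum_row : ∀ i ≤ m, ∑ j ∈ range (n + 1), z i j = μ i
  sum_col : ∀ j ≤ n, ∑ i ∈ range (m + 1), z i j = ν j

theorem isPlan_iff_isCoupling {α : ℕ → ℝ} {m n : ℕ} {z : ℕ → ℕ → ℝ} :
    IsPlan α m n z ↔ IsCoupling (kmPi α · m) (kmPi α · n) m n z :=
  ⟨fun h => ⟨h.1, h.2.1, h.2.2⟩, fun h => ⟨h.nonneg, h.sum_row, h.sum_col⟩⟩

section Coupling

variable {μ ν : ℕ → ℝ} {m n : ℕ} {z : ℕ → ℕ → ℝ} {D : ℕ → ℕ → ℝ}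

theorem planCost_mono {D' : ℕ → ℕ → ℝ} (hz : ∀ i ≤ m, ∀ j ≤ n, 0 ≤ z i j)
    (hD : ∀ i ≤ m, ∀ j ≤ n, D i j ≤ D' i j) : planCost D m n z ≤ planCost D' m n z := by
  unfold planCost
  gcongr with i hi j hj
  · exact hz i (mem_range_succ_iff.mp hi) j (mem_range_succ_iff.mp hj)
  · exact hD i (mem_range_succ_iff.mp hi) j (mem_range_succ_iff.mp hj)

theorem planCost_nonneg (hz : ∀ i ≤ m, ∀ j ≤ n, 0 ≤ z i j) (hD : ∀ i ≤ m, ∀ j ≤ n, 0 ≤ D i j) :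
    0 ≤ planCost D m n z := by
  simpa [planCost] using planCost_mono (D := 0) hz hD

theorem IsCoupling.planCost_one (hz : IsCoupling μ ν m n z) :
    planCost (fun _ _ => 1) m n z = ∑ i ∈ range (m + 1), μ i := by
  simp only [planCost, mul_one]
  exact sum_congr rfl fun i hi => hz.sum_row i (mem_range_succ_iff.mp hi)

theorem isCoupling_diag (hμ : ∀ i ≤ m, 0 ≤ μ i) :
    IsCoupling μ μ m m (fun i j => if i = j then μ i else 0) where
  nonneg i hi j _ := by split_ifs <;> simp [hμ i hi]
  sum_row i hi := by simp [mem_range_succ_iff.mpr hi]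
  sum_col j hj := by simp [mem_range_succ_iff.mpr hj]

theorem planCost_diag :
    planCost D m m (fun i j => if i = j then μ i else 0) = ∑ i ∈ range (m + 1), μ i * D i i := by
  simp only [planCost, ite_mul, zero_mul, sum_ite_eq, mem_range]
  exact sum_congr rfl fun i hi => if_pos (mem_range.mp hi)

theorem IsCoupling.sum_row_mul_div {i : ℕ} (hz : IsCoupling μ ν m n z) (hi : i ≤ m)
    (hμ : μ i ≠ 0) (a : ℝ) :
    ∑ j ∈ range (n + 1), a * z i j / μ i = a := by
  rw [← sum_div, ← mul_sum, hz.sum_row i hi, mul_div_cancel_right₀ _ hμ]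

theorem IsCoupling.sum_col_mul_div {j : ℕ} (hz : IsCoupling μ ν m n z) (hj : j ≤ n)
    (hν : ν j ≠ 0) (a : ℝ) :
    ∑ i ∈ range (m + 1), z i j * a / ν j = a := by
  rw [← sum_div, ← sum_mul, hz.sum_col j hj, mul_div_cancel_left₀ _ hν]

end Coupling


section Glue

variable {μ ν ρ : ℕ → ℝ} {m p n : ℕ} {z₁ z₂ : ℕ → ℕ → ℝ}

noncomputable def gluePlan (ν : ℕ → ℝ) (p : ℕ) (z₁ z₂ : ℕ → ℕ → ℝ) (i j : ℕ) : ℝ :=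
  ∑ k ∈ range (p + 1), z₁ i k * z₂ k j / ν k

variable (hz₁ : IsCoupling μ ν m p z₁) (hz₂ : IsCoupling ν ρ p n z₂) (hν : ∀ k ≤ p, 0 < ν k)
include hz₁ hz₂ hν

theorem IsCoupling.glue : IsCoupling μ ρ m n (gluePlan ν p z₁ z₂) where
  nonneg i hi j hj := sum_nonneg fun k hk =>
    have hk := mem_range_succ_iff.mp hk
    div_nonneg (mul_nonneg (hz₁.nonneg i hi k hk) (hz₂.nonneg k hk j hj)) (hν k hk).le
  sum_row i hi := by
    unfold gluePlan
    rw [sum_comm, ← hz₁.sum_row i hi]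
    refine sum_congr rfl fun k hk => ?_
    have hk := mem_range_succ_iff.mp hk
    exact hz₂.sum_row_mul_div hk (hν k hk).ne' _
  sum_col j hj := by
    unfold gluePlan
    rw [sum_comm, ← hz₂.sum_col j hj]
    refine sum_congr rfl fun k hk => ?_
    have hk := mem_range_succ_iff.mp hk
    exact hz₁.sum_col_mul_div hk (hν k hk).ne' _

theorem planCost_glue_le {D : ℕ → ℕ → ℝ}
    (htri : ∀ i ≤ m, ∀ k ≤ p, ∀ j ≤ n, D i j ≤ D i k + D k j) :
    planCost D m n (gluePlan ν p z₁ z₂) ≤ planCost D m p z₁ + planCost D p n z₂ := by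
  calc planCost D m n (gluePlan ν p z₁ z₂)
      = ∑ i ∈ range (m + 1), ∑ j ∈ range (n + 1), ∑ k ∈ range (p + 1),
          z₁ i k * z₂ k j / ν k * D i j := by
        simp only [planCost, gluePlan, sum_mul]
    _ ≤ ∑ i ∈ range (m + 1), ∑ j ∈ range (n + 1), ∑ k ∈ range (p + 1),
          z₁ i k * z₂ k j / ν k * (D i k + D k j) := by
        gcongr with i hi j hj k hk
        all_goals rw [mem_range_succ_iff] at hi hj hk
        · exact div_nonneg (mul_nonneg (hz₁.nonneg i hi k hk) (hz₂.nonneg k hk j hj)) (hν k hk).le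
        · exact htri i hi k hk j hj
    _ = ∑ i ∈ range (m + 1), ∑ k ∈ range (p + 1),
          ∑ j ∈ range (n + 1), z₁ i k * D i k * z₂ k j / ν k +
        ∑ k ∈ range (p + 1), ∑ j ∈ range (n + 1),
          ∑ i ∈ range (m + 1), z₁ i k * (z₂ k j * D k j) / ν k := by
        simp only [mul_add, sum_add_distrib]
        congr 1
        · refine sum_congr rfl fun i _ => ?_
          rw [sum_comm]
          exact sum_congr rfl fun k _ => sum_congr rfl fun j _ => by ring
        · rw [sum_comm, sum_congr rfl fun j _ => sum_comm, sum_comm]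
          exact sum_congr rfl fun k _ => sum_congr rfl fun j _ => sum_congr rfl fun i _ => by ring
    _ = planCost D m p z₁ + planCost D p n z₂ := by
        unfold planCost
        congr 1
        · refine sum_congr rfl fun i hi => sum_congr rfl fun k hk => ?_
          have hk := mem_range_succ_iff.mp hk
          exact hz₂.sum_row_mul_div hk (hν k hk).ne' _
        · refine sum_congr rfl fun k hk => sum_congr rfl fun j hj => ?_
          have hk := mem_range_succ_iff.mp hk
          exact hz₁.sum_col_mul_div hk (hν k hk).ne' _

end Glue

namespace IsKMDist

variable {α : ℕ → ℝ} {D : ℕ → ℕ → ℝ}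

theorem nonneg (hD : IsKMDist α D) (i j : ℕ) : 0 ≤ D i j := by
  obtain ⟨h00, h0s, hs0, hopt⟩ := hD
  induction i using Nat.strong_induction_on generalizing j with
  | _ i ih =>
  rcases i with _ | i <;> rcases j with _ | j
  · simp [h00]
  · simp [h0s]
  · simp [hs0]
  · obtain ⟨z, hz, hc⟩ := (hopt i j).1
    exact hc ▸ planCost_nonneg hz.1 fun a ha b _ => ih a (by omega) b

theorem le_one (hα0 : α 0 = 1) (hD : IsKMDist α D) (i j : ℕ) : D i j ≤ 1 := by
  obtain ⟨h00, h0s, hs0, hopt⟩ := hD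
  induction i using Nat.strong_induction_on generalizing j with
  | _ i ih =>
  rcases i with _ | i <;> rcases j with _ | j
  · simp [h00]
  · simp [h0s]
  · simp [hs0]
  · obtain ⟨z, hz, hc⟩ := (hopt i j).1
    calc D (i + 1) (j + 1) = planCost D i j z := hc
      _ ≤ planCost (fun _ _ => 1) i j z := planCost_mono hz.1 fun a ha b _ => ih a (by omega) b
      _ = 1 := by rw [(isPlan_iff_isCoupling.mp hz).planCost_one, sum_kmPi hα0]

theorem apply_self (hα0 : α 0 = 1) (hα : ∀ n, 1 ≤ n → α n ∈ Set.Ioo (0 : ℝ) 1)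
    (hD : IsKMDist α D) (k : ℕ) : D k k = 0 := by
  induction k using Nat.strong_induction_on with
  | _ k ih =>
  rcases k with _ | k
  · exact hD.1
  · have hplan := isPlan_iff_isCoupling.mpr (isCoupling_diag fun i _ => (kmPi_pos hα0 hα i k).le)
    have hle := (hD.2.2.2 k k).2 ⟨_, hplan, rfl⟩
    rw [planCost_diag, sum_eq_zero fun i hi => by rw [ih i (by simpa using hi), mul_zero]] at hle
    exact le_antisymm hle (hD.nonneg _ _)

theorem triangle (hα0 : α 0 = 1)
    (hα : ∀ n, 1 ≤ n → α n ∈ Set.Ioo (0 : ℝ) 1) (hD : IsKMDist α D) (a b c : ℕ) :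
    D a c ≤ D a b + D b c := by
  have hnn := hD.nonneg
  have hle := hD.le_one hα0
  obtain ⟨h00, h0s, hs0, hopt⟩ := hD
  induction b using Nat.strong_induction_on generalizing a c with
  | _ b ih =>
  rcases a with _ | a <;> rcases b with _ | b <;> rcases c with _ | c
  all_goals try simp only [h00, h0s, hs0]
  · norm_num
  · norm_num
  · norm_num
  · linarith [hnn (b + 1) (c + 1)]
  · norm_num
  · linarith [hle (a + 1) (c + 1)]
  · linarith [hnn (a + 1) (b + 1)]
  · obtain ⟨z₁, hz₁, hc₁⟩ := (hopt a b).1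
    obtain ⟨z₂, hz₂, hc₂⟩ := (hopt b c).1
    have hz₁ := isPlan_iff_isCoupling.mp hz₁
    have hz₂ := isPlan_iff_isCoupling.mp hz₂
    have hpos : ∀ k ≤ b, 0 < kmPi α k b := fun k _ => kmPi_pos hα0 hα k b
    calc D (a + 1) (c + 1) ≤ planCost D a c (gluePlan (kmPi α · b) b z₁ z₂) :=
          (hopt a c).2 ⟨_, isPlan_iff_isCoupling.mpr (hz₁.glue hz₂ hpos), rfl⟩
      _ ≤ planCost D a b z₁ + planCost D b c z₂ :=
          planCost_glue_le hz₁ hz₂ hpos fun i _ k hk j _ => ih k (by omega) i j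
      _ = D (a + 1) (b + 1) + D (b + 1) (c + 1) := by rw [hc₁, hc₂]

end IsKMDist

theorem sum_sum_eq_add_sum_erase {ι M : Type*} [DecidableEq ι] [AddCommMonoid M]
    {s u : Finset ι} {a : ι} (hs : a ∈ s) (hu : a ∈ u) (F : ι → ι → M) :
    ∑ i ∈ s, ∑ j ∈ u, F i j = F a a + ∑ j ∈ u.erase a, F a j + ∑ i ∈ s.erase a, F i a +
      ∑ i ∈ s.erase a, ∑ j ∈ u.erase a, F i j := by
  rw [← add_sum_erase _ _ hs, ← add_sum_erase _ _ hu,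
    sum_congr rfl fun i _ => (add_sum_erase _ _ hu).symm, sum_add_distrib]
  abel

theorem sum_sum_mul_div_le {ι : Type*} {s u : Finset ι} {a b x y : ι → ℝ} {c : ι → ι → ℝ}
    {R : ℝ} (ha : ∀ i ∈ s, 0 ≤ a i) (hb : ∀ j ∈ u, 0 ≤ b j) (hbR : ∑ j ∈ u, b j = R)
    (hR : 0 < R) (hc : ∀ i ∈ s, ∀ j ∈ u, c i j ≤ x i + y j) :
    ∑ i ∈ s, ∑ j ∈ u, a i * b j / R * c i j ≤
      ∑ i ∈ s, a i * x i + (∑ i ∈ s, a i) / R * ∑ j ∈ u, b j * y j := by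
  calc ∑ i ∈ s, ∑ j ∈ u, a i * b j / R * c i j
      ≤ ∑ i ∈ s, ∑ j ∈ u, a i * b j / R * (x i + y j) := by
        gcongr with i hi j hj
        · exact div_nonneg (mul_nonneg (ha i hi) (hb j hj)) hR.le
        · exact hc i hi j hj
    _ = ∑ i ∈ s, (a i * x i * (∑ j ∈ u, b j) / R + a i / R * ∑ j ∈ u, b j * y j) := by
        refine sum_congr rfl fun i _ => ?_
        rw [mul_sum, mul_sum, sum_div, ← sum_add_distrib]
        exact sum_congr rfl fun j _ => by ring
    _ = _ := by
        rw [hbR, sum_add_distrib, ← sum_mul, sum_div]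
        congr 1
        exact sum_congr rfl fun i _ => by field_simp

section Reroute

variable {μ ν : ℕ → ℝ} {m n t : ℕ} {z : ℕ → ℕ → ℝ}

theorem IsCoupling.sum_row_erase {i j : ℕ} (hz : IsCoupling μ ν m n z) (hi : i ≤ m) (hj : j ≤ n) :
    ∑ k ∈ (range (n + 1)).erase j, z i k = μ i - z i j := by
  rw [sum_erase_eq_sub (mem_range_succ_iff.mpr hj), hz.sum_row i hi]

theorem IsCoupling.sum_col_erase {i j : ℕ} (hz : IsCoupling μ ν m n z) (hi : i ≤ m) (hj : j ≤ n) :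
    ∑ k ∈ (range (m + 1)).erase i, z k j = ν j - z i j := by
  rw [sum_erase_eq_sub (mem_range_succ_iff.mpr hi), hz.sum_col j hj]

/-- Row `t` takes over the mass `ν t - z t t` that the other rows send to column `t`, drawing it
from its off-diagonal entries in proportion; each row `i ≠ t` redistributes its former entry
`z i t` over the columns `j ≠ t` in the proportions of row `t`. -/
noncomputable def reroutePlan (μ ν : ℕ → ℝ) (t : ℕ) (z : ℕ → ℕ → ℝ) (i j : ℕ) : ℝ :=
  if i = t then
    if j = t then ν t else z t j * (1 - (ν t - z t t) / (μ t - z t t))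
  else
    if j = t then 0 else z i j + z i t * z t j / (μ t - z t t)

theorem reroutePlan_of_ne {j : ℕ} (hj : j ≠ t) (hzj : z t j = 0) (i : ℕ) :
    reroutePlan μ ν t z i j = z i j := by
  unfold reroutePlan
  split_ifs with hi <;> simp [hi, hzj]

variable (hz : IsCoupling μ ν m n z) (htm : t ≤ m) (htn : t ≤ n) (hlt : z t t < ν t)
  (hνμ : ν t ≤ μ t)
include hz htm htn hlt hνμ

theorem IsCoupling.reroute : IsCoupling μ ν m n (reroutePlan μ ν t z) := by
  have hmt := mem_range_succ_iff.mpr htm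
  have hnt := mem_range_succ_iff.mpr htn
  have hR : 0 < μ t - z t t := by linarith
  have hR0 := hR.ne'
  have hCR : (ν t - z t t) / (μ t - z t t) ≤ 1 := (div_le_one hR).mpr (by linarith)
  refine ⟨fun i hi j hj => ?_, fun i hi => ?_, fun j hj => ?_⟩
  · unfold reroutePlan
    split_ifs with hit
    · linarith [hz.nonneg t htm t htn]
    · subst hit
      exact mul_nonneg (hz.nonneg i hi j hj) (sub_nonneg.mpr hCR)
    · exact le_rfl
    · exact add_nonneg (hz.nonneg i hi j hj)
        (div_nonneg (mul_nonneg (hz.nonneg i hi t htn) (hz.nonneg t htm j hj)) hR.le)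
  · rw [← add_sum_erase _ _ hnt]
    by_cases hit : i = t
    · subst hit
      simp only [reroutePlan, if_true]
      rw [sum_congr rfl fun j hj => if_neg (ne_of_mem_erase hj), ← sum_mul,
        hz.sum_row_erase htm htn]
      field_simp
      ring
    · simp only [reroutePlan, if_neg hit, if_true]
      rw [sum_congr rfl fun j hj => if_neg (ne_of_mem_erase hj), sum_add_distrib,
        hz.sum_row_erase hi htn, ← sum_div, ← mul_sum,
        hz.sum_row_erase htm htn]
      field_simp
      ring
  · rw [← add_sum_erase _ _ hmt]
    by_cases hjt : j = t
    · subst hjt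
      rw [sum_congr rfl fun i hi => by rw [reroutePlan, if_neg (ne_of_mem_erase hi), if_pos rfl]]
      simp [reroutePlan]
    · simp only [reroutePlan, if_true, if_neg hjt]
      rw [sum_congr rfl fun i hi => by rw [if_neg (ne_of_mem_erase hi)], sum_add_distrib,
        hz.sum_col_erase htm hj, ← sum_div, ← sum_mul, hz.sum_col_erase htm htn]
      field_simp
      ring

theorem planCost_reroute_le {D : ℕ → ℕ → ℝ} (hDtt : D t t = 0)
    (htri : ∀ i ≤ m, ∀ j ≤ n, D i j ≤ D i t + D t j) :
    planCost D m n (reroutePlan μ ν t z) ≤ planCost D m n z := by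
  have hR : 0 < μ t - z t t := by linarith
  have le_of_mem {i k : ℕ} (hi : i ∈ (range (k + 1)).erase t) : i ≤ k :=
    mem_range_succ_iff.mp (mem_of_mem_erase hi)
  have hQ := sum_sum_mul_div_le (c := D) (x := (D · t)) (y := (D t ·))
    (fun i hi => hz.nonneg i (le_of_mem hi) t htn) (fun j hj => hz.nonneg t htm j (le_of_mem hj))
    (hz.sum_row_erase htm htn) hR (fun i hi j hj => htri i (le_of_mem hi) j (le_of_mem hj))
  rw [hz.sum_col_erase htm htn] at hQ
  have e1 : ∑ j ∈ (range (n + 1)).erase t, reroutePlan μ ν t z t j * D t j =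
      (1 - (ν t - z t t) / (μ t - z t t)) * ∑ j ∈ (range (n + 1)).erase t, z t j * D t j := by
    rw [mul_sum]
    exact sum_congr rfl fun j hj => by
      rw [reroutePlan, if_pos rfl, if_neg (ne_of_mem_erase hj)]
      ring
  have e2 : ∑ i ∈ (range (m + 1)).erase t, reroutePlan μ ν t z i t * D i t = 0 :=
    sum_eq_zero fun i hi => by rw [reroutePlan, if_neg (ne_of_mem_erase hi), if_pos rfl, zero_mul]
  have e3 : ∑ i ∈ (range (m + 1)).erase t, ∑ j ∈ (range (n + 1)).erase t,
      reroutePlan μ ν t z i j * D i j =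
      ∑ i ∈ (range (m + 1)).erase t, ∑ j ∈ (range (n + 1)).erase t, z i j * D i j +
      ∑ i ∈ (range (m + 1)).erase t, ∑ j ∈ (range (n + 1)).erase t,
        z i t * z t j / (μ t - z t t) * D i j := by
    rw [← sum_add_distrib]
    refine sum_congr rfl fun i hi => ?_
    rw [← sum_add_distrib]
    exact sum_congr rfl fun j hj => by
      rw [reroutePlan, if_neg (ne_of_mem_erase hi), if_neg (ne_of_mem_erase hj)]
      ring
  unfold planCost
  rw [sum_sum_eq_add_sum_erase (mem_range_succ_iff.mpr htm) (mem_range_succ_iff.mpr htn),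
    sum_sum_eq_add_sum_erase (mem_range_succ_iff.mpr htm) (mem_range_succ_iff.mpr htn),
    e1, e2, e3, hDtt]
  linarith

end Reroute

section Simple

variable {μ ν : ℕ → ℝ} {m n t : ℕ} {z : ℕ → ℕ → ℝ} {D : ℕ → ℕ → ℝ}

theorem IsCoupling.eq_zero_of_apply_self_eq (hz : IsCoupling μ ν m n z) (htm : t ≤ m)
    (htn : t ≤ n) (hzt : z t t = ν t) {i : ℕ} (hi : i ≤ m) (hit : i ≠ t) : z i t = 0 := by
  have hsum := hz.sum_col_erase htm htn
  rw [hzt, sub_self, sum_eq_zero_iff_of_nonneg fun k hk =>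
    hz.nonneg k (mem_range_succ_iff.mp (mem_of_mem_erase hk)) t htn] at hsum
  exact hsum i (mem_erase.mpr ⟨hit, mem_range_succ_iff.mpr hi⟩)

theorem IsCoupling.exists_apply_self_eq (hz : IsCoupling μ ν m n z) (htm : t ≤ m) (htn : t ≤ n)
    (hνμ : ν t ≤ μ t) (hDtt : D t t = 0) (htri : ∀ i ≤ m, ∀ j ≤ n, D i j ≤ D i t + D t j) :
    ∃ w, IsCoupling μ ν m n w ∧ planCost D m n w ≤ planCost D m n z ∧ w t t = ν t ∧
      (∀ i ≤ m, i ≠ t → w i t = 0) ∧ ∀ j, j ≠ t → z t j = 0 → ∀ i, w i j = z i j := by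
  have hle : z t t ≤ ν t := by
    rw [← hz.sum_col t htn]
    exact single_le_sum (f := (z · t)) (fun i hi => hz.nonneg i (mem_range_succ_iff.mp hi) t htn)
      (mem_range_succ_iff.mpr htm)
  rcases hle.lt_or_eq with hlt | heq
  · exact ⟨_, hz.reroute htm htn hlt hνμ, planCost_reroute_le hz htm htn hlt hνμ hDtt htri,
      by simp [reroutePlan], fun i _ hit => by simp [reroutePlan, hit],
      fun j hj hzj => reroutePlan_of_ne hj hzj⟩
  · exact ⟨z, hz, le_rfl, heq, fun i hi hit => hz.eq_zero_of_apply_self_eq htm htn heq hi hit,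
      fun _ _ _ _ => rfl⟩

theorem IsCoupling.exists_simple (hz : IsCoupling μ ν m n z) (hmn : m ≤ n)
    (hνμ : ∀ i ≤ m, ν i ≤ μ i) (hdiag : ∀ i ≤ m, D i i = 0)
    (htri : ∀ i ≤ m, ∀ k ≤ m, ∀ j ≤ n, D i j ≤ D i k + D k j) :
    ∃ w, IsCoupling μ ν m n w ∧ planCost D m n w ≤ planCost D m n z ∧
      (∀ i ≤ m, w i i = ν i) ∧ ∀ i ≤ m, ∀ j ≤ m, j ≠ i → w i j = 0 := by
  suffices h : ∀ t ≤ m + 1, ∃ w, IsCoupling μ ν m n w ∧ planCost D m n w ≤ planCost D m n z ∧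
      ∀ j < t, w j j = ν j ∧ ∀ i ≤ m, i ≠ j → w i j = 0 by
    obtain ⟨w, hw, hcost, hcols⟩ := h (m + 1) le_rfl
    exact ⟨w, hw, hcost, fun i hi => (hcols i (by omega)).1,
      fun i hi j hj hji => (hcols j (by omega)).2 i hi hji.symm⟩
  intro t ht
  induction t with
  | zero => exact ⟨z, hz, le_rfl, by simp⟩
  | succ t ih =>
    have htm : t ≤ m := by omega
    obtain ⟨w, hw, hcost, hcols⟩ := ih (by omega)
    obtain ⟨w', hw', hcost', hw't, hw'col, hsame⟩ := hw.exists_apply_self_eq htm (htm.trans hmn)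
      (hνμ t htm) (hdiag t htm) fun i hi j hj => htri i hi t htm j hj
    refine ⟨w', hw', hcost'.trans hcost, fun j hj => ?_⟩
    rcases Nat.lt_succ_iff_lt_or_eq.mp hj with hj | rfl
    · have hwtj : w t j = 0 := (hcols j hj).2 t htm (by omega)
      simp only [hsame j (by omega) hwtj]
      exact hcols j hj
    · exact ⟨hw't, hw'col⟩

end Simple

/-- for `m ≤ n` there is a *simple* optimal transport plan for `d_{mn}`:
`z_{ii} = π_i^n` for `i = 0,...,m` and `z_{ij} = 0` for `j ≤ m`, `j ≠ i`. -/
theorem km_simple_optimal_plan (α : ℕ → ℝ) (hα0 : α 0 = 1)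
    (hα : ∀ n, 1 ≤ n → α n ∈ Set.Ioo (0 : ℝ) 1)
    (D : ℕ → ℕ → ℝ) (hD : IsKMDist α D) :
    ∀ m n : ℕ, m ≤ n →
      ∃ z : ℕ → ℕ → ℝ, IsPlan α m n z ∧ planCost D m n z = D (m + 1) (n + 1) ∧
        (∀ i ≤ m, z i i = kmPi α i n) ∧
        (∀ i ≤ m, ∀ j ≤ m, j ≠ i → z i j = 0) := by
  intro m n hmn
  obtain ⟨z, hz, hcost⟩ := (hD.2.2.2 m n).1
  obtain ⟨w, hw, hle, hdiag, hoff⟩ := (isPlan_iff_isCoupling.mp hz).exists_simple hmn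
    (fun i hi => kmPi_le_kmPi hα0 hα hi hmn) (fun i _ => hD.apply_self hα0 hα i)
    (fun i _ k _ j _ => hD.triangle hα0 hα i k j)
  have hw := isPlan_iff_isCoupling.mpr hw
  exact ⟨w, hw, le_antisymm (hcost ▸ hle) ((hD.2.2.2 m n).2 ⟨w, hw, rfl⟩), hdiag, hoff⟩
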